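/- Let H be a Hopf algebra over a field k with bijective antipode S, τ a Hopf algebra automorphism of H of finite order r, and (V, ρ) a finite-dimensional left H-module with e = exp_τ(V) finite. Then for every integer ℓ ≥ 0 and every h ∈ H, the shifted twisted power acts trivially: ρ(μ^{er} ∘ ((S⁻²τ)^ℓ ⊗ (S⁻²τ)^{ℓ+1} ⊗ ⋯ ⊗ (S⁻²τ)^{ℓ+er-1}) ∘ Δ^{er-1}(h)) = ε(h)·Id_V. -/

import Mathlib

open scoped TensorProduct

noncomputable section

namespace TwistedExponent

variable (k H : Type*) [CommRing k] [Ring H] [HopfAlgebra k H]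

/-- The convolution product of two linear endomorphisms of a bialgebra:
`f * g = μ ∘ (f ⊗ g) ∘ Δ`. -/
def conv (f g : H →ₗ[k] H) : H →ₗ[k] H :=
  LinearMap.mul' k H ∘ₗ TensorProduct.map f g ∘ₗ Coalgebra.comul

/-- The convolution unit `η ∘ ε`, i.e. `h ↦ ε(h)·1`. -/
def convOne : H →ₗ[k] H := Algebra.linearMap k H ∘ₗ Coalgebra.counit

/-- `gammaFrom T ℓ m` is the shifted map
`μ^m ∘ (T^ℓ ⊗ T^{ℓ+1} ⊗ ⋯ ⊗ T^{ℓ+m-1}) ∘ Δ^{m-1}`, expressed as the convolution product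
`T^ℓ * T^{ℓ+1} * ⋯ * T^{ℓ+m-1}` (with value the convolution unit for `m = 0`). -/
def gammaFrom (T : H →ₗ[k] H) (ℓ : ℕ) : ℕ → (H →ₗ[k] H)
  | 0 => convOne k H
  | (m + 1) => conv k H (gammaFrom T ℓ m) (T ^ (ℓ + m))

/-- `gamma T m` is the map `Γ_m = μ^m ∘ (Id ⊗ T ⊗ T² ⊗ ⋯ ⊗ T^{m-1}) ∘ Δ^{m-1}`. -/
def gamma (T : H →ₗ[k] H) (m : ℕ) : H →ₗ[k] H := gammaFrom k H T 0 m

/-- The inverse of the antipode, given that the antipode is bijective. -/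
def antipodeInv (hS : Function.Bijective (HopfAlgebra.antipode (R := k) (A := H))) :
    H →ₗ[k] H :=
  (LinearEquiv.ofBijective (HopfAlgebra.antipode (R := k) (A := H)) hS).symm

/-- The map `S⁻² ∘ τ`. -/
def twist (hS : Function.Bijective (HopfAlgebra.antipode (R := k) (A := H)))
    (τ : H →ₗ[k] H) : H →ₗ[k] H :=
  antipodeInv k H hS ∘ₗ antipodeInv k H hS ∘ₗ τ

/-- `f : H → H` has exact (finite) order `r`. -/
def HasOrder (τ : H → H) (r : ℕ) : Prop :=
  0 < r ∧ τ^[r] = id ∧ ∀ s : ℕ, 0 < s → s < r → τ^[s] ≠ id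

/-- The map `Γ_m` acts on the `H`-module `V` as `ε·Id_V`. -/
def GammaTrivOn (T : H →ₗ[k] H) (m : ℕ)
    (V : Type*) [AddCommGroup V] [Module k V] [Module H V] [IsScalarTower k H V] : Prop :=
  ∀ (h : H) (v : V), gamma k H T m h • v = Coalgebra.counit (R := k) h • v

end TwistedExponent

open TwistedExponent

/-! Since `S` is an anti-coalgebra map, `S²`, hence `φ = S⁻²τ`, is a coalgebra endomorphism.
Precomposition with a coalgebra map is multiplicative for the convolution product and fixes its
unit, so the shifted product `φ^ℓ * φ^{ℓ+1} * ⋯ * φ^{ℓ+m-1}` equals `Γ_m ∘ φ^ℓ`. As `ε ∘ φ^ℓ = ε`,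
triviality of `Γ_{er}` on `V` transfers to every shift. -/

open Coalgebra HopfAlgebra WithConv

namespace CoalgHom

variable {R A : Type*} [CommSemiring R] [AddCommMonoid A] [Module R A] [CoalgebraStruct R A]

lemma toLinearMap_pow (φ : A →ₗc[R] A) (n : ℕ) :
    ((φ ^ n : A →ₗc[R] A) : A →ₗ[R] A) = (φ : A →ₗ[R] A) ^ n := by
  induction n with
  | zero => rfl
  | succ n ih => rw [pow_succ, pow_succ, ← ih]; rfl

end CoalgHom

namespace HopfAlgebra

variable {R A : Type*} [CommSemiring R] [Semiring A] [HopfAlgebra R A]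

lemma algHom_comp_antipode_convMul {B : Type*} [Semiring B] [Algebra R B] (f : A →ₐ[R] B) :
    toConv (f.toLinearMap ∘ₗ antipode R) * toConv f.toLinearMap = 1 := by
  have h := LinearMap.algHom_comp_convMul_distrib f (toConv (antipode R)) (toConv LinearMap.id)
  rw [LinearMap.antipode_mul_id] at h
  simp only [LinearMap.comp_id] at h
  apply WithConv.ofConv_injective
  rw [← h]
  ext c
  simp

lemma includeLeft_convMul_includeRight :
    toConv (Algebra.TensorProduct.includeLeft (S := R)).toLinearMap *
      toConv (Algebra.TensorProduct.includeRight (A := A)).toLinearMap =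
      toConv (comul (R := R)) := by
  ext c
  simp [(ℛ R c).convMul_apply, ← (ℛ R c).eq]

lemma includeRight_comp_antipode_convMul_includeLeft_comp_antipode :
    toConv ((Algebra.TensorProduct.includeRight (A := A)).toLinearMap ∘ₗ antipode R) *
      toConv ((Algebra.TensorProduct.includeLeft (S := R)).toLinearMap ∘ₗ antipode R) =
      toConv (TensorProduct.map (antipode R) (antipode R) ∘ₗ
        (TensorProduct.comm R A A).toLinearMap ∘ₗ comul) := by
  ext c
  simp [(ℛ R c).convMul_apply, ← (ℛ R c).eq]

/- In the convolution monoid of maps `A → A ⊗ A`, `Δ = i₁ * i₂` with `i₁ = (· ⊗ 1)` and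
`i₂ = (1 ⊗ ·)`. Since `iⱼ ∘ S` is a convolution inverse of the algebra map `iⱼ`, the map
`(i₂ ∘ S) * (i₁ ∘ S) = (S ⊗ S) ∘ comm ∘ Δ` is a left inverse of `Δ`, and `Δ ∘ S` a right one. -/
theorem comul_comp_antipode :
    comul ∘ₗ antipode R =
      TensorProduct.map (antipode R) (antipode R) ∘ₗ
        (TensorProduct.comm R A A).toLinearMap ∘ₗ comul := by
  have hleft : toConv (TensorProduct.map (antipode R) (antipode R) ∘ₗ
      (TensorProduct.comm R A A).toLinearMap ∘ₗ comul) * toConv (comul (R := R) (A := A)) = 1 := by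
    rw [← includeRight_comp_antipode_convMul_includeLeft_comp_antipode,
      ← includeLeft_convMul_includeRight, mul_assoc,
      ← mul_assoc (toConv (Algebra.TensorProduct.includeLeft.toLinearMap ∘ₗ _)),
      algHom_comp_antipode_convMul, one_mul, algHom_comp_antipode_convMul]
  exact congrArg ofConv (left_inv_eq_right_inv hleft LinearMap.comul_right_inv).symm

lemma comul_antipode (x : A) :
    comul (antipode R x) =
      TensorProduct.map (antipode R) (antipode R) (TensorProduct.comm R A A (comul x)) :=
  LinearMap.congr_fun comul_comp_antipode x

def antipodeSqCoalgHom : A →ₗc[R] A where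
  toLinearMap := antipode R ∘ₗ antipode R
  counit_comp := by ext; simp
  map_comp_comul := by
    refine LinearMap.ext fun x => ?_
    simp only [LinearMap.comp_apply]
    rw [comul_antipode, comul_antipode, ← TensorProduct.map_comm, TensorProduct.comm_comm,
      TensorProduct.map_map]

def antipodeSqCoalgEquiv (hS : Function.Bijective (antipode R (A := A))) : A ≃ₗc[R] A :=
  CoalgEquiv.ofBijective (f := antipodeSqCoalgHom) (hS.comp hS)

end HopfAlgebra

namespace TwistedExponent

variable {k H : Type*} [CommRing k] [Ring H] [HopfAlgebra k H]

lemma coe_antipodeSqCoalgEquiv_symm (hS : Function.Bijective (antipode k (A := H))) :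
    ((antipodeSqCoalgEquiv hS).symm : H →ₗ[k] H) = antipodeInv k H hS ∘ₗ antipodeInv k H hS := by
  have hinv (y : H) : antipode k (antipodeInv k H hS y) = y :=
    (LinearEquiv.ofBijective _ hS).apply_symm_apply y
  ext x
  apply (hS.comp hS).1
  simp only [Function.comp_apply, LinearMap.comp_apply, hinv]
  exact (antipodeSqCoalgEquiv hS).apply_symm_apply x

lemma twist_eq_coe_coalgHom (hS : Function.Bijective (antipode k (A := H))) (τ : H →ₗc[k] H) :
    twist k H hS τ = (((antipodeSqCoalgEquiv hS).symm : H →ₗc[k] H).comp τ : H →ₗ[k] H) := by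
  rw [twist, CoalgHom.comp_toLinearMap, ← LinearMap.comp_assoc, ← coe_antipodeSqCoalgEquiv_symm]
  rfl

lemma conv_comp_coalgHom (f g : H →ₗ[k] H) (ψ : H →ₗc[k] H) :
    conv k H f g ∘ₗ ψ = conv k H (f ∘ₗ ψ) (g ∘ₗ ψ) :=
  LinearMap.convMul_comp_coalgHom_distrib (toConv f) (toConv g) ψ

lemma convOne_comp_coalgHom (ψ : H →ₗc[k] H) : convOne k H ∘ₗ ψ = convOne k H := by
  rw [convOne, LinearMap.comp_assoc, CoalgHomClass.counit_comp]

lemma gammaFrom_eq_gamma_comp (φ : H →ₗc[k] H) (ℓ m : ℕ) :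
    gammaFrom k H φ ℓ m = gamma k H φ m ∘ₗ (φ : H →ₗ[k] H) ^ ℓ := by
  rw [← CoalgHom.toLinearMap_pow, gamma]
  induction m with
  | zero => exact (convOne_comp_coalgHom _).symm
  | succ m ih =>
    rw [gammaFrom, gammaFrom, conv_comp_coalgHom, ← ih, CoalgHom.toLinearMap_pow,
      ← Module.End.mul_eq_comp, ← pow_add, zero_add, add_comm]

end TwistedExponent

theorem stmt6_general {k H : Type*} [Field k] [Ring H] [HopfAlgebra k H]
    (hS : Function.Bijective (HopfAlgebra.antipode (R := k) (A := H)))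
    (τ : H ≃ₐc[k] H) (r : ℕ)
    (V : Type*) [AddCommGroup V] [Module k V] [Module H V] [IsScalarTower k H V]
    (e : ℕ)
    (he : IsLeast {n : ℕ | 0 < n ∧
      GammaTrivOn k H (twist k H hS (τ : H →ₗ[k] H)) (n * r) V} e) :
    ∀ (ℓ : ℕ) (h : H) (v : V),
      gammaFrom k H (twist k H hS (τ : H →ₗ[k] H)) ℓ (e * r) h • v =
        Coalgebra.counit (R := k) h • v := by
  intro ℓ h v
  set φ : H →ₗc[k] H := ((antipodeSqCoalgEquiv hS).symm : H →ₗc[k] H).comp (τ : H →ₗc[k] H)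
  have hφ : twist k H hS (τ : H →ₗ[k] H) = φ := twist_eq_coe_coalgHom hS τ
  obtain ⟨⟨-, hφ_triv⟩, -⟩ := he
  rw [hφ] at hφ_triv ⊢
  rw [gammaFrom_eq_gamma_comp, ← CoalgHom.toLinearMap_pow, LinearMap.comp_apply, hφ_triv]
  exact congrArg (· • v) (CoalgHomClass.counit_comp_apply (φ ^ ℓ) h)

/-- Let `H` be a Hopf algebra over a field `k` with bijective antipode `S`,
`τ` a Hopf algebra automorphism of `H` of finite order `r`, and `(V, ρ)` a finite-dimensional
left `H`-module with `e = exp_τ(V)` finite.  Then for every `ℓ ≥ 0` and every `h ∈ H` the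
shifted twisted power acts trivially:
`ρ(μ^{er} ∘ ((S⁻²τ)^ℓ ⊗ (S⁻²τ)^{ℓ+1} ⊗ ⋯ ⊗ (S⁻²τ)^{ℓ+er-1}) ∘ Δ^{er-1}(h)) = ε(h)·Id_V`. -/
theorem stmt6 {k H : Type*} [Field k] [Ring H] [HopfAlgebra k H]
    (hS : Function.Bijective (HopfAlgebra.antipode (R := k) (A := H)))
    (τ : H ≃ₐc[k] H) (r : ℕ) (hr : HasOrder H (⇑τ) r)
    (V : Type*) [AddCommGroup V] [Module k V] [Module H V] [IsScalarTower k H V]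
    [FiniteDimensional k V]
    (e : ℕ)
    (he : IsLeast {n : ℕ | 0 < n ∧
      GammaTrivOn k H (twist k H hS (τ : H →ₗ[k] H)) (n * r) V} e) :
    ∀ (ℓ : ℕ) (h : H) (v : V),
      gammaFrom k H (twist k H hS (τ : H →ₗ[k] H)) ℓ (e * r) h • v =
        Coalgebra.counit (R := k) h • v :=
  stmt6_general hS τ r V e he
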